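/- arXiv:2202.08728 — 4 statements merged into one kernel-verified Lean document; each statement's English description precedes it below -/
import Mathlib

section
/- The NPRR mechanism with parameters r ∈ (0,1) and integer G ≥ 1 satisfies ε-local differential privacy with ε = log(1 + (G+1)r/(1-r)). That is, for any inputs x, x̃ ∈ [0,1] and any output z in the grid {0, 1/G, ..., 1}, the ratio of conditional output probabilities q(z|x)/q(z|x̃) is at most 1 + (G+1)r/(1-r), where q(z|x) = (1-r)/(G+1) + r·G·(𝟙(z = ⌈Gx⌉/G)(x - ⌊Gx⌋/G) + 𝟙(z = ⌊Gx⌋/G)(⌈Gx⌉/G - x)). -/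
/-- NPRR satisfies ε-LDP with ε = log(1 + (G+1)r/(1-r)): for inputs `x, x' ∈ [0,1]`
and any output `z` in the grid `{0, 1/G, ..., 1}`, the likelihood ratio of the NPRR
output pmf is at most `1 + (G+1)r/(1-r)`. -/
theorem nprr_ldp
    (r : ℝ) (hr : r ∈ Set.Ioo (0 : ℝ) 1)
    (G : ℕ) (hG : 1 ≤ G)
    (q : ℝ → ℝ → ℝ)
    (hq : ∀ z x, q z x =
      (1 - r) / (G + 1) +
        r * G * ((if z = (⌈(G : ℝ) * x⌉ : ℝ) / G then 1 else 0) * (x - (⌊(G : ℝ) * x⌋ : ℝ) / G)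
          + (if z = (⌊(G : ℝ) * x⌋ : ℝ) / G then 1 else 0) * ((⌈(G : ℝ) * x⌉ : ℝ) / G - x)))
    (x x' : ℝ) (hx : x ∈ Set.Icc (0 : ℝ) 1) (hx' : x' ∈ Set.Icc (0 : ℝ) 1)
    (z : ℝ) (hz : ∃ k : ℕ, k ≤ G ∧ z = (k : ℝ) / G) :
    q z x / q z x' ≤ 1 + (G + 1) * r / (1 - r) := by
  obtain ⟨hr0, hr1⟩ := hr
  have hG1 : (1 : ℝ) ≤ G := by exact_mod_cast hG
  have hGpos : (0 : ℝ) < G := by linarith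
  have key : ∀ y : ℝ, (1 - r) / (G + 1) ≤ q z y ∧ q z y ≤ (1 - r) / (G + 1) + r := by
    intro y
    have h1 : (⌊(G : ℝ) * y⌋ : ℝ) ≤ (G : ℝ) * y := Int.floor_le _
    have h2 : (G : ℝ) * y ≤ (⌈(G : ℝ) * y⌉ : ℝ) := Int.le_ceil _
    have h3 : ((⌈(G : ℝ) * y⌉ : ℝ)) ≤ (⌊(G : ℝ) * y⌋ : ℝ) + 1 := by
      exact_mod_cast Int.ceil_le_floor_add_one ((G : ℝ) * y)
    have ha : 0 ≤ y - (⌊(G : ℝ) * y⌋ : ℝ) / G := by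
      rw [sub_nonneg, div_le_iff₀ hGpos]; nlinarith
    have hb : 0 ≤ (⌈(G : ℝ) * y⌉ : ℝ) / G - y := by
      rw [sub_nonneg, le_div_iff₀ hGpos]; nlinarith
    have hab : (G : ℝ) * ((y - (⌊(G : ℝ) * y⌋ : ℝ) / G) + ((⌈(G : ℝ) * y⌉ : ℝ) / G - y)) ≤ 1 := by
      have : (G : ℝ) * ((y - (⌊(G : ℝ) * y⌋ : ℝ) / G) + ((⌈(G : ℝ) * y⌉ : ℝ) / G - y))
          = (⌈(G : ℝ) * y⌉ : ℝ) - (⌊(G : ℝ) * y⌋ : ℝ) := by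
        field_simp
        ring
      rw [this]; linarith
    rw [hq]
    constructor
    · have : 0 ≤ r * G * ((if z = (⌈(G : ℝ) * y⌉ : ℝ) / G then 1 else 0) * (y - (⌊(G : ℝ) * y⌋ : ℝ) / G)
          + (if z = (⌊(G : ℝ) * y⌋ : ℝ) / G then 1 else 0) * ((⌈(G : ℝ) * y⌉ : ℝ) / G - y)) := by
        have hrG : 0 ≤ r * (G : ℝ) := by positivity
        split_ifs <;> nlinarith [mul_le_mul_of_nonneg_left hab hr0.le,
          mul_nonneg (mul_nonneg hr0.le hGpos.le) ha, mul_nonneg (mul_nonneg hr0.le hGpos.le) hb]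
      linarith
    · have hmain : r * G * ((if z = (⌈(G : ℝ) * y⌉ : ℝ) / G then 1 else 0) * (y - (⌊(G : ℝ) * y⌋ : ℝ) / G)
          + (if z = (⌊(G : ℝ) * y⌋ : ℝ) / G then 1 else 0) * ((⌈(G : ℝ) * y⌉ : ℝ) / G - y)) ≤ r := by
        split_ifs <;> nlinarith [mul_le_mul_of_nonneg_left hab hr0.le,
          mul_nonneg (mul_nonneg hr0.le hGpos.le) ha, mul_nonneg (mul_nonneg hr0.le hGpos.le) hb]
      linarith
  have hA : (0 : ℝ) < (1 - r) / (G + 1) := div_pos (by linarith) (by positivity)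
  have hq' : 0 < q z x' := lt_of_lt_of_le hA (key x').1
  rw [div_le_iff₀ hq']
  have h1 : q z x ≤ (1 - r) / (G + 1) + r := (key x).2
  have h2 : (1 - r) / (G + 1) + r = (1 + (G + 1) * r / (1 - r)) * ((1 - r) / (G + 1)) := by
    have h1r : (1 : ℝ) - r ≠ 0 := by linarith
    field_simp
  have hB : (0 : ℝ) < 1 + (G + 1) * r / (1 - r) := by
    have : 0 ≤ ((G : ℝ) + 1) * r / (1 - r) := div_nonneg (by positivity) (by linarith)
    linarith
  calc q z x ≤ (1 + (G + 1) * r / (1 - r)) * ((1 - r) / (G + 1)) := by rw [← h2]; exact h1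
    _ ≤ (1 + (G + 1) * r / (1 - r)) * q z x' := by
        exact mul_le_mul_of_nonneg_left (key x').1 hB.le
end

section
/- Private Hoeffding confidence sequence: under the setup where Z_1, Z_2, ... are [0,1]-valued with E[Z_t | 𝒵_{t-1}] = r_t μ* + (1-r_t)/2 and λ_t > 0, define μ̂_t := (Σ_{i=1}^t λ_i (Z_i - (1-r_i)/2)) / (Σ_{i=1}^t r_i λ_i) and B_t := (log(1/α) + Σ_{i=1}^t λ_i²/8) / (Σ_{i=1}^t r_i λ_i). Then P(∃ t ≥ 1 : μ* < μ̂_t - B_t) ≤ α. -/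
/-!
Let `ζ_i = r_i μ* + (1 - r_i) / 2` be the conditional mean of `Z_i`. By the conditional Hoeffding
lemma, `M_t = exp (∑_{i ≤ t} λ_i (Z_i - ζ_i) - λ_i² / 8)` is a nonnegative supermartingale with
`M_0 = 1`, so Ville's inequality gives `P(∃ t, M_t ≥ 1 / α) ≤ α`. As `∑_{i ≤ t} r_i λ_i > 0`,
the event `μ* < μ̂_t - B_t` says exactly `log (1 / α) < log M_t`.
-/

open MeasureTheory Finset Real ProbabilityTheory

lemma exp_mul_le_one_sub_add_mul_exp {z : ℝ} (hz0 : 0 ≤ z) (hz1 : z ≤ 1) (x : ℝ) :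
    exp (x * z) ≤ 1 - z + z * exp x := by
  simpa [mul_comm] using convexOn_exp.2 (Set.mem_univ 0) (Set.mem_univ x)
    (sub_nonneg.2 hz1) hz0 (by ring)

/-- Hoeffding's lemma for a Bernoulli(`p`) variable: the general Hoeffding lemma applied to the law
`(1 - p) δ₀ + p δ₁`. -/
lemma one_sub_add_mul_exp_le {p : ℝ} (hp0 : 0 ≤ p) (hp1 : p ≤ 1) (x : ℝ) :
    1 - p + p * exp x ≤ exp (x * p + x ^ 2 / 8) := by
  set ν : Measure ℝ :=
    ENNReal.ofReal (1 - p) • Measure.dirac 0 + ENNReal.ofReal p • Measure.dirac 1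
  have : IsProbabilityMeasure ν :=
    ⟨by simp [ν, ← ENNReal.ofReal_add (sub_nonneg.2 hp1) hp0]⟩
  have hν (f : ℝ → ℝ) : ∫ y, f y ∂ν = (1 - p) * f 0 + p * f 1 := by
    rw [integral_add_measure, integral_smul_measure, integral_smul_measure, integral_dirac,
      integral_dirac, ENNReal.toReal_ofReal (sub_nonneg.2 hp1), ENNReal.toReal_ofReal hp0,
      smul_eq_mul, smul_eq_mul]
    all_goals exact (integrable_dirac (by simp)).smul_measure ENNReal.ofReal_ne_top
  have hb : ∀ᵐ y ∂ν, y ∈ Set.Icc (0 : ℝ) 1 :=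
    ae_add_measure_iff.2 ⟨Measure.ae_smul_measure (by simp) _, Measure.ae_smul_measure (by simp) _⟩
  have hmgf := (hasSubgaussianMGF_of_mem_Icc aemeasurable_id hb).mgf_le x
  simp only [mgf, hν, id] at hmgf
  norm_num at hmgf
  calc 1 - p + p * exp x
      = exp (x * p) * ((1 - p) * exp (-(x * p)) + p * exp (x * (1 - p))) := by
        rw [mul_add, mul_left_comm, ← exp_add, mul_left_comm, ← exp_add,
          show x * p + -(x * p) = 0 by ring, show x * p + x * (1 - p) = x by ring, exp_zero]
        ring
    _ ≤ exp (x * p) * exp (1 / 4 * x ^ 2 / 2) := by gcongr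
    _ = exp (x * p + x ^ 2 / 8) := by rw [← exp_add]; ring_nf

section

variable {Ω : Type*} {m m0 : MeasurableSpace Ω} {μ : Measure Ω} [IsFiniteMeasure μ]

lemma integrable_exp_of_ae_le {f : Ω → ℝ} (hf : AEStronglyMeasurable f μ) {C : ℝ}
    (hC : ∀ᵐ ω ∂μ, f ω ≤ C) : Integrable (fun ω => exp (f ω)) μ :=
  .of_bound (continuous_exp.comp_aestronglyMeasurable hf) (exp C) <| by
    filter_upwards [hC] with ω h
    rw [norm_of_nonneg (exp_pos _).le]
    exact exp_le_exp.2 h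

/-- Conditional Hoeffding lemma. By convexity `exp (x * Y) ≤ 1 - Y + Y * exp x`, whose conditional
expectation is `1 - ρ + ρ * exp x`; this is then bounded by the Bernoulli case. -/
lemma condExp_exp_mul_sub_sub_le_one (hm : m ≤ m0) {Y ρ : Ω → ℝ}
    (hY : ∀ᵐ ω ∂μ, Y ω ∈ Set.Icc 0 1) (hYint : Integrable Y μ) (hρ : Measurable[m] ρ)
    (hρ01 : ∀ ω, ρ ω ∈ Set.Icc 0 1) (hcond : μ[Y|m] =ᵐ[μ] ρ) (x : ℝ) :
    μ[fun ω => exp (x * (Y ω - ρ ω) - x ^ 2 / 8)|m] ≤ᵐ[μ] 1 := by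
  set c : Ω → ℝ := fun ω => exp (-(x * ρ ω) - x ^ 2 / 8)
  have hc : StronglyMeasurable[m] c :=
    ((hρ.const_mul x).neg.sub_const _).exp.stronglyMeasurable
  have hsplit : (fun ω => exp (x * (Y ω - ρ ω) - x ^ 2 / 8)) = c * fun ω => exp (x * Y ω) := by
    funext ω
    simp only [c, Pi.mul_apply, ← exp_add]
    ring_nf
  have hexpY : Integrable (fun ω => exp (x * Y ω)) μ :=
    integrable_exp_of_ae_le (hYint.aestronglyMeasurable.const_mul x) (C := |x|) <| by
      filter_upwards [hY] with ω ⟨h0, h1⟩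
      nlinarith [le_abs_self x, abs_nonneg x]
  have hcexpY : Integrable (c * fun ω => exp (x * Y ω)) μ := by
    rw [← hsplit]
    refine integrable_exp_of_ae_le ?_ (C := |x|) ?_
    · exact ((hYint.aestronglyMeasurable.sub (hρ.mono hm le_rfl).aestronglyMeasurable).const_mul
        x).sub aestronglyMeasurable_const
    · filter_upwards [hY] with ω ⟨h0, h1⟩
      obtain ⟨hρ0, hρ1⟩ := hρ01 ω
      nlinarith [le_abs_self x, neg_abs_le x, sq_nonneg x]
  have haff : Integrable (fun ω => 1 + (exp x - 1) * Y ω) μ :=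
    (integrable_const 1).add (hYint.const_mul _)
  have hconv : (fun ω => exp (x * Y ω)) ≤ᵐ[μ] fun ω => 1 + (exp x - 1) * Y ω := by
    filter_upwards [hY] with ω ⟨h0, h1⟩
    linarith [exp_mul_le_one_sub_add_mul_exp h0 h1 x]
  have haffcond : μ[fun ω => 1 + (exp x - 1) * Y ω|m] =ᵐ[μ] fun ω => 1 + (exp x - 1) * ρ ω := by
    filter_upwards [condExp_add (integrable_const 1) (hYint.smul (exp x - 1)) m,
      condExp_smul (exp x - 1) Y m, hcond] with ω h1 h2 h3
    change μ[(fun _ => (1 : ℝ)) + (exp x - 1) • Y|m] ω = _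
    rw [h1, Pi.add_apply, h2, condExp_const hm, Pi.smul_apply, h3, smul_eq_mul]
  rw [hsplit]
  filter_upwards [condExp_mul_of_stronglyMeasurable_left hc hcexpY hexpY,
    condExp_mono (m := m) hexpY haff hconv, haffcond] with ω h1 h2 h3
  obtain ⟨hρ0, hρ1⟩ := hρ01 ω
  calc (μ[c * fun ω => exp (x * Y ω)|m]) ω
      = c ω * μ[fun ω => exp (x * Y ω)|m] ω := h1
    _ ≤ c ω * (1 + (exp x - 1) * ρ ω) := by gcongr; exact h2.trans h3.le
    _ ≤ c ω * exp (x * ρ ω + x ^ 2 / 8) := by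
        gcongr; linarith [one_sub_add_mul_exp_le hρ0 hρ1 x]
    _ = 1 := by simp only [c, ← exp_add]; ring_nf; exact exp_zero

lemma supermartingale_exp_sum_range {𝒢 : Filtration ℕ m0} {D : ℕ → Ω → ℝ}
    (hD : ∀ i, Measurable[𝒢 (i + 1)] (D i)) (hbdd : ∀ i, ∃ C, ∀ᵐ ω ∂μ, D i ω ≤ C)
    (hmgf : ∀ i, μ[fun ω => exp (D i ω)|𝒢 i] ≤ᵐ[μ] 1) :
    Supermartingale (fun t ω => exp (∑ i ∈ range t, D i ω)) 𝒢 μ := by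
  choose C hC using hbdd
  have hS (t : ℕ) : Measurable[𝒢 t] fun ω => ∑ i ∈ range t, D i ω :=
    Finset.measurable_fun_sum _ fun i hi => (hD i).mono (𝒢.mono (mem_range.1 hi)) le_rfl
  have hint (t : ℕ) : Integrable (fun ω => exp (∑ i ∈ range t, D i ω)) μ :=
    integrable_exp_of_ae_le ((hS t).mono (𝒢.le t) le_rfl).aestronglyMeasurable
      (C := ∑ i ∈ range t, C i) <| by
        filter_upwards [ae_all_iff.2 hC] with ω hω using sum_le_sum fun i _ => hω i
  refine supermartingale_nat (fun t => (hS t).exp.stronglyMeasurable) hint fun t => ?_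
  have hsplit : (fun ω => exp (∑ i ∈ range (t + 1), D i ω)) =
      (fun ω => exp (∑ i ∈ range t, D i ω)) * fun ω => exp (D t ω) := by
    funext ω
    simp only [sum_range_succ, exp_add, Pi.mul_apply]
  have hDint : Integrable (fun ω => exp (D t ω)) μ :=
    integrable_exp_of_ae_le ((hD t).mono (𝒢.le _) le_rfl).aestronglyMeasurable (hC t)
  rw [hsplit]
  filter_upwards [condExp_mul_of_stronglyMeasurable_left (hS t).exp.stronglyMeasurable
    (hsplit ▸ hint (t + 1)) hDint, hmgf t] with ω h1 h2
  rw [h1, Pi.mul_apply]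
  exact mul_le_of_le_one_right (exp_pos _).le h2

/-- Stop `f` when it first reaches `c` before time `n`: on the event the stopped value is at least
`c`, and by optional stopping its expectation is at most `μ[f 0]`. -/
lemma MeasureTheory.Supermartingale.measure_exists_le_le_of_nonneg {𝒢 : Filtration ℕ m0}
    {f : ℕ → Ω → ℝ}
    (hf : Supermartingale f 𝒢 μ) (hnonneg : 0 ≤ f) {c : ℝ} (hc : 0 < c) (n : ℕ) :
    μ {ω | ∃ k ≤ n, c ≤ f k ω} ≤ ENNReal.ofReal (μ[f 0] / c) := by
  set A := {ω | ∃ k ≤ n, c ≤ f k ω}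
  set τ : Ω → ℕ∞ := fun ω => (hittingBtwn f (Set.Ici c) 0 n ω : ℕ)
  have hτ : IsStoppingTime 𝒢 τ :=
    hf.stronglyAdapted.adapted.isStoppingTime_hittingBtwn measurableSet_Ici
  have hτn (ω : Ω) : τ ω ≤ n := ENat.natCast_le_natCast.2 (hittingBtwn_le ω)
  have hint : Integrable (stoppedValue f τ) μ :=
    integrable_neg_iff.1 (hf.neg.integrable_stoppedValue hτ hτn)
  have hA : MeasurableSet A := by
    have : A = ⋃ k ∈ Set.Iic n, {ω | c ≤ f k ω} := by ext ω; simp [A]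
    rw [this]
    exact .biUnion (Set.to_countable _) fun k _ =>
      measurableSet_le measurable_const
        ((hf.stronglyMeasurable k).measurable.mono (𝒢.le k) le_rfl)
  have hstop : μ[stoppedValue f τ] ≤ μ[f 0] := by
    have h := hf.neg.expected_stoppedValue_mono (isStoppingTime_const 𝒢 0) hτ
      (fun _ => zero_le) hτn
    rw [stoppedValue_const] at h
    change ∫ ω, -f 0 ω ∂μ ≤ ∫ ω, -stoppedValue f τ ω ∂μ at h
    rwa [integral_neg, integral_neg, neg_le_neg_iff] at h
  have hcA : c * μ.real A ≤ μ[f 0] :=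
    calc c * μ.real A ≤ ∫ ω in A, stoppedValue f τ ω ∂μ :=
          setIntegral_ge_of_const_le_real hA (measure_ne_top μ _)
            (fun ω ⟨k, hk, hck⟩ => stoppedValue_hittingBtwn_mem ⟨k, ⟨Nat.zero_le k, hk⟩, hck⟩)
            hint.integrableOn
      _ ≤ μ[stoppedValue f τ] :=
          setIntegral_le_integral hint (.of_forall fun ω => hnonneg _ ω)
      _ ≤ μ[f 0] := hstop
  rw [ENNReal.le_ofReal_iff_toReal_le (measure_ne_top μ _)
    (div_nonneg (integral_nonneg (hnonneg 0)) hc.le), le_div_iff₀ hc, mul_comm]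
  exact hcA

/-- **Ville's inequality**. -/
lemma MeasureTheory.Supermartingale.measure_exists_le_of_nonneg {𝒢 : Filtration ℕ m0}
    {f : ℕ → Ω → ℝ}
    (hf : Supermartingale f 𝒢 μ) (hnonneg : 0 ≤ f) {c : ℝ} (hc : 0 < c) :
    μ {ω | ∃ t, c ≤ f t ω} ≤ ENNReal.ofReal (μ[f 0] / c) := by
  have hmono : Monotone fun n => {ω | ∃ k ≤ n, c ≤ f k ω} :=
    fun a b hab ω ⟨k, hk, hck⟩ => ⟨k, hk.trans hab, hck⟩
  calc μ {ω | ∃ t, c ≤ f t ω} ≤ μ (⋃ n, {ω | ∃ k ≤ n, c ≤ f k ω}) :=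
        measure_mono fun ω ⟨t, ht⟩ => Set.mem_iUnion.2 ⟨t, t, le_rfl, ht⟩
    _ = ⨆ n, μ {ω | ∃ k ≤ n, c ≤ f k ω} := hmono.measure_iUnion
    _ ≤ _ := iSup_le (hf.measure_exists_le_le_of_nonneg hnonneg hc)

lemma supermartingale_exp_hoeffding {𝒢 : Filtration ℕ m0} {Z ζ : ℕ → Ω → ℝ} (hZ : Adapted 𝒢 Z)
    (hZ01 : ∀ i, ∀ᵐ ω ∂μ, Z (i + 1) ω ∈ Set.Icc 0 1) (hZint : ∀ i, Integrable (Z (i + 1)) μ)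
    (hζ : ∀ i, Measurable[𝒢 i] (ζ (i + 1))) (hζ01 : ∀ i ω, ζ (i + 1) ω ∈ Set.Icc 0 1)
    (hcond : ∀ i, μ[Z (i + 1)|𝒢 i] =ᵐ[μ] ζ (i + 1)) (l : ℕ → ℝ) :
    Supermartingale
      (fun t ω => exp (∑ i ∈ Icc 1 t, (l i * (Z i ω - ζ i ω) - l i ^ 2 / 8))) 𝒢 μ := by
  have hreindex (t : ℕ) (f : ℕ → ℝ) : ∑ i ∈ Icc 1 t, f i = ∑ i ∈ range t, f (i + 1) := by
    rw [range_eq_Ico, sum_Ico_add' f 0 t 1, zero_add, Ico_add_one_right_eq_Icc]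
  simp_rw [hreindex]
  refine supermartingale_exp_sum_range (fun i => ?_) (fun i => ⟨|l (i + 1)|, ?_⟩) fun i =>
    condExp_exp_mul_sub_sub_le_one (𝒢.le i) (hZ01 i) (hZint i) (hζ i) (hζ01 i) (hcond i) _
  · exact (((hZ (i + 1)).sub ((hζ i).mono (𝒢.mono i.le_succ) le_rfl)).const_mul _).sub_const _
  · filter_upwards [hZ01 i] with ω ⟨hZ0, hZ1⟩
    obtain ⟨hζ0, hζ1⟩ := hζ01 i ω
    nlinarith [le_abs_self (l (i + 1)), neg_abs_le (l (i + 1)), sq_nonneg (l (i + 1))]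

end

/-- Private Hoeffding confidence sequence: with `Z_t ∈ [0,1]` having conditional mean
`r_t μ* + (1-r_t)/2` given the past and `λ_t > 0`, the lower bounds
`μ̂_t - B_t` with `μ̂_t = (Σ λ_i (Z_i - (1-r_i)/2)) / (Σ r_i λ_i)` and
`B_t = (log(1/α) + Σ λ_i²/8) / (Σ r_i λ_i)` satisfy
`P(∃ t ≥ 1 : μ* < μ̂_t - B_t) ≤ α`. -/
theorem nprr_hoeffding_confidence_sequence
    {Ω : Type*} [m0 : MeasurableSpace Ω] (μ : Measure Ω) [IsProbabilityMeasure μ]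
    (𝒵 : Filtration ℕ m0) (Z : ℕ → Ω → ℝ) (hZ : Adapted 𝒵 Z)
    (r : ℕ → Ω → ℝ) (l : ℕ → ℝ) (μstar : ℝ) (α : ℝ)
    (hμstar : μstar ∈ Set.Icc (0 : ℝ) 1) (hα : α ∈ Set.Ioo (0 : ℝ) 1)
    (hl : ∀ t, 0 < l t)
    (hrval : ∀ t ω, r t ω ∈ Set.Ioc (0 : ℝ) 1)
    (hrpred : ∀ t, 1 ≤ t → Measurable[𝒵 (t - 1)] (r t))
    (hZbdd : ∀ t, 1 ≤ t → ∀ᵐ ω ∂μ, Z t ω ∈ Set.Icc (0 : ℝ) 1)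
    (hZint : ∀ t, Integrable (Z t) μ)
    (hcond : ∀ t, 1 ≤ t →
      μ[Z t|𝒵 (t - 1)] =ᵐ[μ] fun ω => r t ω * μstar + (1 - r t ω) / 2) :
    μ {ω | ∃ t, 1 ≤ t ∧ μstar <
        (∑ i ∈ Finset.Icc 1 t, l i * (Z i ω - (1 - r i ω) / 2)) /
          (∑ i ∈ Finset.Icc 1 t, r i ω * l i) -
        (Real.log (1 / α) + ∑ i ∈ Finset.Icc 1 t, (l i) ^ 2 / 8) /
          (∑ i ∈ Finset.Icc 1 t, r i ω * l i)}
      ≤ ENNReal.ofReal α := by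
  obtain ⟨hα0, -⟩ := hα
  obtain ⟨hμ0, hμ1⟩ := hμstar
  set ζ : ℕ → Ω → ℝ := fun i ω => r i ω * μstar + (1 - r i ω) / 2
  have hζ01 (i : ℕ) (ω : Ω) : ζ i ω ∈ Set.Icc 0 1 := by
    obtain ⟨hr0, hr1⟩ := hrval i ω
    constructor <;> simp only [ζ] <;> nlinarith
  have hζ (i : ℕ) : Measurable[𝒵 i] (ζ (i + 1)) :=
    ((hrpred (i + 1) i.succ_pos).mul_const μstar).add
      ((measurable_const.sub (hrpred (i + 1) i.succ_pos)).div_const 2)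
  have hsuper := supermartingale_exp_hoeffding hZ (fun i => hZbdd _ i.succ_pos)
    (fun i => hZint _) hζ (fun i => hζ01 (i + 1)) (fun i => hcond (i + 1) i.succ_pos) l
  refine (measure_mono ?_).trans ((hsuper.measure_exists_le_of_nonneg
    (fun _ _ => (exp_pos _).le) (one_div_pos.2 hα0)).trans (by simp))
  rintro ω ⟨t, ht, hlt⟩
  have hR : 0 < ∑ i ∈ Icc 1 t, r i ω * l i :=
    sum_pos (fun i _ => mul_pos (hrval i ω).1 (hl i)) (nonempty_Icc.2 ht)
  rw [div_sub_div_same, lt_div_iff₀ hR] at hlt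
  refine ⟨t, ?_⟩
  rw [← exp_log (one_div_pos.2 hα0), exp_le_exp, sum_sub_distrib]
  have hcenter : ∑ i ∈ Icc 1 t, l i * (Z i ω - ζ i ω) =
      ∑ i ∈ Icc 1 t, l i * (Z i ω - (1 - r i ω) / 2) - μstar * ∑ i ∈ Icc 1 t, r i ω * l i := by
    rw [mul_sum, ← sum_sub_distrib]
    exact sum_congr rfl fun i _ => by simp only [ζ]; ring
  linarith
end

section
/- Two-sided sub-Gaussian mixture confidence sequence for time-varying means: let Z_1, Z_2, ... be independent [0,1]-valued random variables with E[Z_i] = r μ_i* + (1-r)/2 for fixed r ∈ (0,1] and μ_i* ∈ [0,1]. Define μ̂_t := (Σ_{i=1}^t (Z_i − (1-r)/2))/(tr) and B_t := sqrt( ((tβ² + 1)/(2(trβ)²)) · log( √(tβ²+1)/α ) ) for any β > 0. Then P(∀ t ≥ 1, |μ̂_t − (1/t) Σ_{i=1}^t μ_i*| ≤ B_t) ≥ 1 − α. -/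
/-!
For every `λ`, the process `exp (λ Sₜ - t λ² / 8)`, where `Sₜ = ∑ᵢ₌₁ᵗ (Zᵢ - E Zᵢ)`, is a
nonnegative supermartingale: the increments are independent and `1/4`-sub-Gaussian by
Hoeffding's lemma. By Tonelli, so is its mixture over `λ` against the Gaussian weight
`exp (-λ² / (8β²))` (the paper's prior with `ρ = 2β`); completing the square gives it in closed
form, `√(8πβ²) · exp (2β² Sₜ² / (tβ² + 1)) / √(tβ² + 1)`. By Ville's inequality this exceeds
`√(8πβ²) / α` at some time with probability at most `α`. Off that event
`Sₜ² ≤ (tβ² + 1) / (2β²) · log (√(tβ² + 1) / α)` for every `t`, and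
`μ̂ₜ - (1/t) ∑ μᵢ* = Sₜ / (t r)`.
-/

open MeasureTheory ProbabilityTheory Finset ENNReal Real

section Ville

variable {Ω : Type*} {m : MeasurableSpace Ω} {μ : Measure Ω}

lemma mul_measure_inter_add_setLIntegral_sdiff_le {f : Ω → ℝ≥0∞} (hf : Measurable f)
    (c : ℝ≥0∞) (s : Set Ω) :
    c * μ (s ∩ {ω | c ≤ f ω}) + ∫⁻ ω in s \ {ω | c ≤ f ω}, f ω ∂μ ≤ ∫⁻ ω in s, f ω ∂μ := by
  rw [← lintegral_inter_add_sdiff f s (measurableSet_le measurable_const hf),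
    ← setLIntegral_const]
  gcongr ?_ + _
  exact setLIntegral_mono hf fun ω hω => hω.2

variable {𝓕 : Filtration ℕ m} {M : ℕ → Ω → ℝ≥0∞}

/- The left-hand side is at most the expectation of `M` stopped when it first reaches `c` (or at
time `n`), and optional stopping bounds that by `∫⁻ M 0`. -/
lemma ville_ineq_finite (hM : ∀ n, Measurable[𝓕 n] (M n))
    (hsuper : ∀ n s, MeasurableSet[𝓕 n] s →
      ∫⁻ ω in s, M (n + 1) ω ∂μ ≤ ∫⁻ ω in s, M n ω ∂μ)
    (c : ℝ≥0∞) (n : ℕ) :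
    c * μ {ω | ∀ j ≤ n, M j ω < c}ᶜ + ∫⁻ ω in {ω | ∀ j ≤ n, M j ω < c}, M n ω ∂μ ≤
      ∫⁻ ω, M 0 ω ∂μ := by
  have hM' n : Measurable (M n) := (hM n).mono (𝓕.le n) le_rfl
  induction n with
  | zero =>
    have h := mul_measure_inter_add_setLIntegral_sdiff_le (μ := μ) (hM' 0) c Set.univ
    simpa [Set.compl_ofPred, Set.sdiff_eq] using h
  | succ n ih =>
    set good : Set Ω := {ω | ∀ j ≤ n, M j ω < c}
    have hgood : MeasurableSet[𝓕 n] good := by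
      simp only [good, Set.ofPred_forall]
      exact .iInter fun j => .iInter fun hj =>
        measurableSet_lt ((hM j).mono (𝓕.mono hj) le_rfl) measurable_const
    have hgood_succ : {ω | ∀ j ≤ n + 1, M j ω < c} = good \ {ω | c ≤ M (n + 1) ω} := by
      ext ω
      simp [good, Nat.le_succ_iff, or_imp, forall_and]
    have hbad_succ : {ω | ∀ j ≤ n + 1, M j ω < c}ᶜ =
        goodᶜ ∪ (good ∩ {ω | c ≤ M (n + 1) ω}) := by
      ext ω
      simp only [hgood_succ, Set.mem_compl_iff, Set.mem_sdiff, Set.mem_union, Set.mem_inter_iff]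
      tauto
    have hbad : MeasurableSet (good ∩ {ω | c ≤ M (n + 1) ω}) :=
      (𝓕.le n _ hgood).inter (measurableSet_le measurable_const (hM' _))
    calc c * μ {ω | ∀ j ≤ n + 1, M j ω < c}ᶜ
          + ∫⁻ ω in {ω | ∀ j ≤ n + 1, M j ω < c}, M (n + 1) ω ∂μ
        = c * μ goodᶜ + (c * μ (good ∩ {ω | c ≤ M (n + 1) ω})
          + ∫⁻ ω in good \ {ω | c ≤ M (n + 1) ω}, M (n + 1) ω ∂μ) := by
          rw [hbad_succ, measure_union (disjoint_compl_left.mono_right Set.inter_subset_left)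
            hbad, hgood_succ, mul_add, add_assoc]
      _ ≤ c * μ goodᶜ + ∫⁻ ω in good, M (n + 1) ω ∂μ := by
          gcongr
          exact mul_measure_inter_add_setLIntegral_sdiff_le (hM' _) c good
      _ ≤ c * μ goodᶜ + ∫⁻ ω in good, M n ω ∂μ := add_le_add_right (hsuper n good hgood) _
      _ ≤ ∫⁻ ω, M 0 ω ∂μ := ih

/-- Ville's inequality, for `ℝ≥0∞`-valued supermartingales with the supermartingale property
tested on sets, so that no integrability is needed. -/
theorem ville_ineq (hM : ∀ n, Measurable[𝓕 n] (M n))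
    (hsuper : ∀ n s, MeasurableSet[𝓕 n] s →
      ∫⁻ ω in s, M (n + 1) ω ∂μ ≤ ∫⁻ ω in s, M n ω ∂μ)
    (c : ℝ≥0∞) :
    c * μ {ω | ∃ n, c ≤ M n ω} ≤ ∫⁻ ω, M 0 ω ∂μ := by
  have hbad : {ω | ∃ n, c ≤ M n ω} = ⋃ n, {ω | ∀ j ≤ n, M j ω < c}ᶜ := by
    ext ω
    simp only [Set.mem_ofPred_eq, Set.mem_iUnion, Set.mem_compl_iff, not_forall, not_lt]
    exact ⟨fun ⟨n, hn⟩ => ⟨n, n, le_rfl, hn⟩, fun ⟨_, j, _, hj⟩ => ⟨j, hj⟩⟩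
  have hmono : Monotone fun n => {ω | ∀ j ≤ n, M j ω < c}ᶜ := fun n k hnk =>
    Set.compl_subset_compl.2 fun ω hω j hj => hω j (hj.trans hnk)
  rw [hbad, hmono.measure_iUnion, ENNReal.mul_iSup]
  exact iSup_le fun n => le_self_add.trans (ville_ineq_finite hM hsuper c n)

end Ville

lemma ProbabilityTheory.HasSubgaussianMGF.lintegral_ofReal_exp_mul_le {Ω : Type*}
    {m : MeasurableSpace Ω} {μ : Measure Ω} {Y : Ω → ℝ} {c : NNReal} (h : HasSubgaussianMGF Y c μ) (l : ℝ) :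
    ∫⁻ ω, ENNReal.ofReal (exp (l * Y ω)) ∂μ ≤ ENNReal.ofReal (exp (c * l ^ 2 / 2)) := by
  rw [← ofReal_integral_eq_lintegral_ofReal (h.integrable_exp_mul l)
    (ae_of_all _ fun _ => (exp_pos _).le)]
  exact ENNReal.ofReal_le_ofReal (h.mgf_le l)

noncomputable def expMixture {Ω : Type*} (ν : Measure ℝ) (c : NNReal) (X : ℕ → Ω → ℝ)
    (n : ℕ) (ω : Ω) : ℝ≥0∞ :=
  ∫⁻ l, ENNReal.ofReal (exp (l * ∑ i ∈ Icc 1 n, X i ω - n * c * l ^ 2 / 2)) ∂ν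

lemma Measurable.expMixture {Ω : Type*} {mΩ : MeasurableSpace Ω} {ν : Measure ℝ} [SFinite ν]
    {c : NNReal} {X : ℕ → Ω → ℝ} {n : ℕ} (hS : Measurable fun ω => ∑ i ∈ Icc 1 n, X i ω) :
    Measurable (expMixture ν c X n) :=
  Measurable.lintegral_prod_left <| .ennreal_ofReal <| .exp <|
    (measurable_fst.mul (hS.comp measurable_snd)).sub (by fun_prop)

section Mixture

variable {Ω : Type*} {m : MeasurableSpace Ω} {μ : Measure Ω} {X : ℕ → Ω → ℝ}
  (hX : ∀ i, StronglyMeasurable (X i)) {c : NNReal}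

lemma measurable_sum_Icc_natural (n : ℕ) :
    Measurable[Filtration.natural X hX n] fun ω => ∑ i ∈ Icc 1 n, X i ω :=
  Finset.measurable_fun_sum _ fun i hi =>
    ((Filtration.stronglyAdapted_natural hX i).mono
      (Filtration.natural X hX |>.mono (Finset.mem_Icc.1 hi).2)).measurable

lemma setLIntegral_exp_sum_succ_le (hindep : iIndepFun X μ) {n : ℕ}
    (hsg : HasSubgaussianMGF (X (n + 1)) c μ) (l : ℝ) {s : Set Ω}
    (hs : MeasurableSet[Filtration.natural X hX n] s) :
    ∫⁻ ω in s, ENNReal.ofReal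
        (exp (l * ∑ i ∈ Icc 1 (n + 1), X i ω - (n + 1 : ℕ) * c * l ^ 2 / 2)) ∂μ ≤
      ∫⁻ ω in s, ENNReal.ofReal (exp (l * ∑ i ∈ Icc 1 n, X i ω - n * c * l ^ 2 / 2)) ∂μ := by
  set 𝓕 := Filtration.natural X hX
  set f : Ω → ℝ≥0∞ := fun ω => ENNReal.ofReal (exp (l * ∑ i ∈ Icc 1 n, X i ω - n * c * l ^ 2 / 2))
  set g : Ω → ℝ≥0∞ := fun ω => ENNReal.ofReal (exp (l * X (n + 1) ω))
  have hf : Measurable[𝓕 n] f := by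
    have := measurable_sum_Icc_natural hX n
    fun_prop
  have hg : Measurable[MeasurableSpace.comap (X (n + 1)) inferInstance] g := by
    have : Measurable[MeasurableSpace.comap (X (n + 1)) inferInstance] (X (n + 1)) :=
      comap_measurable _
    fun_prop
  have hsplit ω : ENNReal.ofReal
      (exp (l * ∑ i ∈ Icc 1 (n + 1), X i ω - (n + 1 : ℕ) * c * l ^ 2 / 2)) =
        f ω * g ω * ENNReal.ofReal (exp (-(c * l ^ 2 / 2))) := by
    rw [← ENNReal.ofReal_mul (exp_pos _).le, ← ENNReal.ofReal_mul (by positivity),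
      ← exp_add, ← exp_add, Finset.sum_Icc_succ_top (by omega)]
    push_cast
    ring_nf
  have hindep_n : Indep (𝓕 n) (MeasurableSpace.comap (X (n + 1)) inferInstance) μ :=
    (hindep.indep_comap_natural_of_lt hX (Nat.lt_succ_self n)).symm
  calc ∫⁻ ω in s, ENNReal.ofReal
          (exp (l * ∑ i ∈ Icc 1 (n + 1), X i ω - (n + 1 : ℕ) * c * l ^ 2 / 2)) ∂μ
      = (∫⁻ ω, s.indicator f ω * g ω ∂μ) * ENNReal.ofReal (exp (-(c * l ^ 2 / 2))) := by
        simp_rw [hsplit, ← Set.indicator_mul_left]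
        rw [lintegral_mul_const' _ _ ofReal_ne_top, lintegral_indicator (𝓕.le n _ hs)]
    _ = (∫⁻ ω in s, f ω ∂μ) * (∫⁻ ω, g ω ∂μ) * ENNReal.ofReal (exp (-(c * l ^ 2 / 2))) := by
        rw [lintegral_mul_eq_lintegral_mul_lintegral_of_independent_measurableSpace
          (𝓕.le n) (hX (n + 1)).measurable.comap_le hindep_n (hf.indicator hs) hg,
          lintegral_indicator (𝓕.le n _ hs)]
    _ ≤ (∫⁻ ω in s, f ω ∂μ) * ENNReal.ofReal (exp (c * l ^ 2 / 2))
          * ENNReal.ofReal (exp (-(c * l ^ 2 / 2))) := by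
        gcongr
        exact hsg.lintegral_ofReal_exp_mul_le l
    _ = ∫⁻ ω in s, f ω ∂μ := by
        rw [mul_assoc, ← ENNReal.ofReal_mul (exp_pos _).le, ← exp_add, add_neg_cancel, exp_zero,
          ENNReal.ofReal_one, mul_one]

variable [SFinite μ] {ν : Measure ℝ} [SFinite ν]

lemma measurable_expMixture_natural (n : ℕ) :
    Measurable[Filtration.natural X hX n] (expMixture ν c X n) :=
  (measurable_sum_Icc_natural hX n).expMixture

lemma setLIntegral_expMixture_succ_le (hindep : iIndepFun X μ)
    (hsg : ∀ i, HasSubgaussianMGF (X i) c μ) (n : ℕ) {s : Set Ω}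
    (hs : MeasurableSet[Filtration.natural X hX n] s) :
    ∫⁻ ω in s, expMixture ν c X (n + 1) ω ∂μ ≤ ∫⁻ ω in s, expMixture ν c X n ω ∂μ := by
  have hswap k : ∫⁻ ω in s, expMixture ν c X k ω ∂μ = ∫⁻ l, ∫⁻ ω in s,
      ENNReal.ofReal (exp (l * ∑ i ∈ Icc 1 k, X i ω - k * c * l ^ 2 / 2)) ∂μ ∂ν := by
    refine lintegral_lintegral_swap (Measurable.aemeasurable ?_)
    have hS := Finset.measurable_fun_sum (Icc 1 k) fun i _ => (hX i).measurable
    exact .ennreal_ofReal <| .exp <| (measurable_snd.mul (hS.comp measurable_fst)).sub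
      (by fun_prop)
  rw [hswap, hswap]
  exact lintegral_mono fun l => setLIntegral_exp_sum_succ_le hX hindep (hsg (n + 1)) l hs

end Mixture

lemma lintegral_ofReal_exp_mul_sub_mul_sq {b : ℝ} (hb : 0 < b) (s : ℝ) :
    ∫⁻ l, ENNReal.ofReal (exp (l * s - b * l ^ 2)) =
      ENNReal.ofReal (√(π / b) * exp (s ^ 2 / (4 * b))) := by
  have hsq l :
      exp (l * s - b * l ^ 2) = exp (s ^ 2 / (4 * b)) * exp (-b * (l - s / (2 * b)) ^ 2) := by
    rw [← exp_add]
    congr 1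
    field_simp
    ring
  simp_rw [hsq, ENNReal.ofReal_mul (exp_pos _).le]
  rw [lintegral_const_mul' _ _ ofReal_ne_top,
    lintegral_sub_right_eq_self (fun l => ENNReal.ofReal (exp (-b * l ^ 2))),
    ← ofReal_integral_eq_lintegral_ofReal (integrable_exp_neg_mul_sq hb)
      (ae_of_all _ fun _ => (exp_pos _).le), integral_gaussian,
    ← ENNReal.ofReal_mul (exp_pos _).le, mul_comm]

lemma expMixture_withDensity_exp_neg_mul_sq {Ω : Type*} {a : ℝ} (ha : 0 < a) (c : NNReal)
    (X : ℕ → Ω → ℝ) (n : ℕ) (ω : Ω) :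
    expMixture (volume.withDensity fun l => ENNReal.ofReal (exp (-(a * l ^ 2)))) c X n ω =
      ENNReal.ofReal (√(π / (a + n * c / 2)) *
        exp ((∑ i ∈ Icc 1 n, X i ω) ^ 2 / (4 * (a + n * c / 2)))) := by
  rw [expMixture, lintegral_withDensity_eq_lintegral_mul _ (by fun_prop) (by fun_prop),
    ← lintegral_ofReal_exp_mul_sub_mul_sq (by positivity)]
  congr 1 with l
  rw [Pi.mul_apply, ← ENNReal.ofReal_mul (exp_pos _).le, ← exp_add]
  ring_nf

lemma sq_le_mul_log_of_sqrt_mul_exp_lt {a b s α : ℝ} (ha : 0 < a) (hb : 0 < b) (hα : 0 < α)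
    (h : √(π / b) * exp (s ^ 2 / (4 * b)) < √(π / a) / α) :
    s ^ 2 ≤ 4 * b * log (√(b / a) / α) := by
  have hratio : √(π / a) / √(π / b) = √(b / a) := by
    rw [← sqrt_div (by positivity)]
    congr 1
    field_simp
  have hexp : exp (s ^ 2 / (4 * b)) < √(b / a) / α := by
    rwa [← hratio, div_right_comm, lt_div_iff₀' (by positivity)]
  have := (lt_log_iff_exp_lt (by positivity)).2 hexp
  rw [div_lt_iff₀' (by positivity)] at this
  exact this.le

lemma abs_div_mul_le_sqrt {s t r β L : ℝ} (ht : 0 < t) (hr : 0 < r) (hβ : 0 < β)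
    (h : s ^ 2 ≤ (t * β ^ 2 + 1) / (2 * β ^ 2) * L) :
    |s / (t * r)| ≤ √((t * β ^ 2 + 1) / (2 * (t * r * β) ^ 2) * L) := by
  rw [← sqrt_sq_eq_abs]
  apply sqrt_le_sqrt
  calc (s / (t * r)) ^ 2 = s ^ 2 / (t * r) ^ 2 := div_pow _ _ _
    _ ≤ (t * β ^ 2 + 1) / (2 * β ^ 2) * L / (t * r) ^ 2 := by gcongr
    _ = _ := by field_simp

theorem ofReal_one_sub_le_measure_forall_sq_sum_le {Ω : Type*} {m : MeasurableSpace Ω}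
    {μ : Measure Ω} [IsProbabilityMeasure μ] {X : ℕ → Ω → ℝ} (hX : ∀ i, StronglyMeasurable (X i))
    (hindep : iIndepFun X μ) {c : NNReal} (hsg : ∀ i, HasSubgaussianMGF (X i) c μ)
    {a α : ℝ} (ha : 0 < a) (hα : 0 < α) :
    ENNReal.ofReal (1 - α) ≤ μ {ω | ∀ n : ℕ, (∑ i ∈ Icc 1 n, X i ω) ^ 2 ≤
      4 * (a + n * c / 2) * log (√((a + n * c / 2) / a) / α)} := by
  set ν : Measure ℝ := volume.withDensity fun l => ENNReal.ofReal (exp (-(a * l ^ 2)))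
  set M := expMixture ν c X
  set threshold := ENNReal.ofReal (√(π / a) / α)
  have hM n : Measurable (M n) :=
    (measurable_expMixture_natural hX n).mono (Filtration.le _ n) le_rfl
  have hbad_meas : MeasurableSet {ω | ∃ n, threshold ≤ M n ω} := by
    simp only [Set.ofPred_exists]
    exact .iUnion fun n => measurableSet_le measurable_const (hM n)
  have hbad : μ {ω | ∃ n, threshold ≤ M n ω} ≤ ENNReal.ofReal α := by
    have hM0 : ∫⁻ ω, M 0 ω ∂μ = threshold * ENNReal.ofReal α := by
      rw [← ENNReal.ofReal_mul (by positivity), div_mul_cancel₀ _ hα.ne']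
      simp only [M, ν, expMixture_withDensity_exp_neg_mul_sq ha]
      simp
    rw [← ENNReal.mul_le_mul_iff_right (a := threshold) (by positivity) ofReal_ne_top, ← hM0]
    exact ville_ineq (measurable_expMixture_natural hX)
      (fun n s hs => setLIntegral_expMixture_succ_le hX hindep hsg n hs) threshold
  calc ENNReal.ofReal (1 - α) ≤ μ {ω | ∃ n, threshold ≤ M n ω}ᶜ := by
        rw [prob_compl_eq_one_sub hbad_meas, ENNReal.ofReal_sub _ hα.le, ENNReal.ofReal_one]
        exact tsub_le_tsub_left hbad 1
    _ ≤ _ := by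
        refine measure_mono fun ω hω n => sq_le_mul_log_of_sqrt_mul_exp_lt ha (by positivity) hα ?_
        have hlt : M n ω < threshold := not_le.1 fun h => hω ⟨n, h⟩
        simp only [M, ν, expMixture_withDensity_exp_neg_mul_sq ha] at hlt
        rwa [ENNReal.ofReal_lt_ofReal_iff (by positivity)] at hlt

theorem two_sided_mixture_cs_time_varying_means_general
    {Ω : Type*} [MeasurableSpace Ω] (μ : Measure Ω) [IsProbabilityMeasure μ]
    (Z : ℕ → Ω → ℝ) (μs : ℕ → ℝ) (r β α : ℝ)
    (hr : r ∈ Set.Ioc (0 : ℝ) 1) (hβ : 0 < β) (hα : α ∈ Set.Ioo (0 : ℝ) 1)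
    (hmeas : ∀ i, Measurable (Z i))
    (hindep : iIndepFun Z μ)
    (hbdd : ∀ i, ∀ᵐ ω ∂μ, Z i ω ∈ Set.Icc (0 : ℝ) 1)
    (hmean : ∀ i, ∫ ω, Z i ω ∂μ = r * μs i + (1 - r) / 2) :
    ENNReal.ofReal (1 - α) ≤
      μ {ω | ∀ t : ℕ, 1 ≤ t →
        |(∑ i ∈ Finset.Icc 1 t, (Z i ω - (1 - r) / 2)) / (t * r) -
            (1 / t) * ∑ i ∈ Finset.Icc 1 t, μs i| ≤
          Real.sqrt ((t * β ^ 2 + 1) / (2 * (t * r * β) ^ 2) *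
            Real.log (Real.sqrt (t * β ^ 2 + 1) / α))} := by
  obtain ⟨hr, -⟩ := hr
  set X : ℕ → Ω → ℝ := fun i ω => Z i ω - ∫ ω', Z i ω' ∂μ
  have hXsg i : HasSubgaussianMGF (X i) ((‖(1 : ℝ) - 0‖₊ / 2) ^ 2) μ :=
    hasSubgaussianMGF_of_mem_Icc (hmeas i).aemeasurable (hbdd i)
  have hc : (((‖(1 : ℝ) - 0‖₊ / 2) ^ 2 : NNReal) : ℝ) = 1 / 4 := by norm_num
  refine (ofReal_one_sub_le_measure_forall_sq_sum_le
    (fun i => ((hmeas i).sub_const _).stronglyMeasurable)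
    (hindep.comp (fun i x => x - ∫ ω, Z i ω ∂μ) fun _ => measurable_id.sub_const _) hXsg
    (a := 1 / (8 * β ^ 2)) (by positivity) hα.1).trans (measure_mono fun ω hω t ht => ?_)
  have hcenter : (∑ i ∈ Icc 1 t, (Z i ω - (1 - r) / 2)) / (t * r) -
      (1 / t) * ∑ i ∈ Icc 1 t, μs i = (∑ i ∈ Icc 1 t, X i ω) / (t * r) := by
    have hsum : ∑ i ∈ Icc 1 t, (Z i ω - (1 - r) / 2) =
        ∑ i ∈ Icc 1 t, X i ω + r * ∑ i ∈ Icc 1 t, μs i := by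
      rw [Finset.mul_sum, ← Finset.sum_add_distrib]
      exact Finset.sum_congr rfl fun i _ => by simp only [X, hmean]; ring
    rw [hsum]
    field_simp
    ring
  have hsq := hω t
  rw [hc, show (1 / (8 * β ^ 2) + t * (1 / 4) / 2) / (1 / (8 * β ^ 2)) = t * β ^ 2 + 1 by
    field_simp; ring] at hsq
  rw [hcenter]
  exact abs_div_mul_le_sqrt (by positivity) hr hβ (hsq.trans_eq (by field_simp; ring))

/-- Two-sided sub-Gaussian mixture confidence sequence for time-varying means: with
independent `Z_i ∈ [0,1]`, `E[Z_i] = r μ_i* + (1-r)/2`, `μ̂_t = (Σ (Z_i − (1-r)/2))/(tr)`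
and `B_t = sqrt(((tβ²+1)/(2(trβ)²)) log(√(tβ²+1)/α))`, we have
`P(∀ t ≥ 1, |μ̂_t − (1/t) Σ μ_i*| ≤ B_t) ≥ 1 − α`. -/
theorem two_sided_mixture_cs_time_varying_means
    {Ω : Type*} [MeasurableSpace Ω] (μ : Measure Ω) [IsProbabilityMeasure μ]
    (Z : ℕ → Ω → ℝ) (μs : ℕ → ℝ) (r β α : ℝ)
    (hr : r ∈ Set.Ioc (0 : ℝ) 1) (hβ : 0 < β) (hα : α ∈ Set.Ioo (0 : ℝ) 1)
    (hμs : ∀ i, μs i ∈ Set.Icc (0 : ℝ) 1)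
    (hmeas : ∀ i, Measurable (Z i))
    (hindep : iIndepFun Z μ)
    (hbdd : ∀ i, ∀ᵐ ω ∂μ, Z i ω ∈ Set.Icc (0 : ℝ) 1)
    (hmean : ∀ i, ∫ ω, Z i ω ∂μ = r * μs i + (1 - r) / 2) :
    ENNReal.ofReal (1 - α) ≤
      μ {ω | ∀ t : ℕ, 1 ≤ t →
        |(∑ i ∈ Finset.Icc 1 t, (Z i ω - (1 - r) / 2)) / (t * r) -
            (1 / t) * ∑ i ∈ Finset.Icc 1 t, μs i| ≤
          Real.sqrt ((t * β ^ 2 + 1) / (2 * (t * r * β) ^ 2) *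
            Real.log (Real.sqrt (t * β ^ 2 + 1) / α))} :=
  two_sided_mixture_cs_time_varying_means_general μ Z μs r β α hr hβ hα hmeas hindep hbdd hmean
end

section
/- Laplace mechanism supermartingale: let X_1, X_2, ... be [0,1]-valued with conditional mean μ* given the past, let L_t be conditionally mean-zero Laplace with scale 1/ε_t, conditionally independent of X_t, and set Z_t = X_t + L_t. Then for predictable λ_t ∈ [0, ε_t), M_t := ∏_{i=1}^t exp{ λ_i (Z_i − μ*) − λ_i²/8 − ψ_i(λ_i) } with ψ_i(λ) := −log(1 − λ²/ε_i²) is a nonnegative supermartingale starting at one. -/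
/-!
Conditionally on the past, `X_t - μ*` is centred and `[0,1]`-valued, so by Hoeffding's lemma its
moment generating function is at most `exp (λ²/8)`, while that of the conditionally independent
noise `L_t` is `1 / (1 - λ²/ε_t²) = exp ψ_t(λ)`. Hence every factor of `M_t` has conditional mean
at most one. As `λ_t` is random, this is argued under the regular conditional distribution
`condExpKernel`, where `λ_t` is almost surely constant. There the mgf identity for `L_t`, given
almost surely for each fixed `λ`, holds simultaneously for all rational `λ`, hence for all
`λ ∈ (-ε_t, ε_t)` by continuity of the mgf.
-/

open MeasureTheory ProbabilityTheory Finset Real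

lemma one_sub_sq_div_sq_pos {c ε : ℝ} (hc : |c| < ε) : 0 < 1 - c ^ 2 / ε ^ 2 := by
  have hε : 0 < ε := (abs_nonneg c).trans_lt hc
  rw [sub_pos, div_lt_one (by positivity), ← sq_abs]
  exact pow_lt_pow_left₀ hc (abs_nonneg c) two_ne_zero

section MGF

variable {Ω : Type*} {m : MeasurableSpace Ω}

lemma integrable_exp_mul_and_mgf_eqOn_Ioo_of_rat {μ : Measure Ω} {X : Ω → ℝ} {a b : ℝ}
    {g : ℝ → ℝ} (hg : ContinuousOn g (Set.Ioo a b))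
    (h : ∀ q : ℚ, (q : ℝ) ∈ Set.Ioo a b →
      Integrable (fun ω => exp (q * X ω)) μ ∧ mgf X μ q = g q) :
    ∀ t ∈ Set.Ioo a b, Integrable (fun ω => exp (t * X ω)) μ ∧ mgf X μ t = g t := by
  have h_int : ∀ t ∈ Set.Ioo a b, Integrable (fun ω => exp (t * X ω)) μ := by
    intro t ht
    obtain ⟨q₁, haq₁, hq₁t⟩ := exists_rat_btwn ht.1
    obtain ⟨q₂, htq₂, hq₂b⟩ := exists_rat_btwn ht.2
    exact integrable_exp_mul_of_le_of_le (h q₁ ⟨haq₁, hq₁t.trans ht.2⟩).1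
      (h q₂ ⟨ht.1.trans htq₂, hq₂b⟩).1 hq₁t.le htq₂.le
  have h_interior : Set.Ioo a b ⊆ interior (integrableExpSet X μ) :=
    isOpen_Ioo.subset_interior_iff.2 h_int
  have h_eqOn : Set.EqOn (mgf X μ) g (Set.Ioo a b) := by
    refine Set.EqOn.of_subset_closure (s := Set.Ioo a b ∩ Set.range ((↑) : ℚ → ℝ)) ?_
      (continuousOn_mgf.mono h_interior) hg Set.inter_subset_left
      (Rat.denseRange_cast.open_subset_closure_inter isOpen_Ioo)
    rintro _ ⟨ht, q, rfl⟩
    exact (h q ht).2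
  exact fun t ht => ⟨h_int t ht, h_eqOn ht⟩

lemma lintegral_exp_laplace_increment_le_one {ν : Measure Ω} [IsProbabilityMeasure ν]
    {X L : Ω → ℝ} {μ₀ c ε : ℝ} (hX : AEMeasurable X ν) (hL : AEMeasurable L ν)
    (hXL : IndepFun X L ν) (hXbdd : ∀ᵐ y ∂ν, X y ∈ Set.Icc (0 : ℝ) 1) (hXmean : ν[X] = μ₀)
    (hc : |c| < ε) (hLint : Integrable (fun y => exp (c * L y)) ν)
    (hLmgf : mgf L ν c = 1 / (1 - c ^ 2 / ε ^ 2)) :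
    ∫⁻ y, ENNReal.ofReal (exp (c * (X y + L y - μ₀) - c ^ 2 / 8 + log (1 - c ^ 2 / ε ^ 2))) ∂ν
      ≤ 1 := by
  set Y : Ω → ℝ := fun y => X y - μ₀
  have hY : HasSubgaussianMGF Y (1 / 4) ν := by
    convert hasSubgaussianMGF_of_mem_Icc hX hXbdd using 2
    · rw [hXmean]
    · norm_num
  have hYmgf : mgf Y ν c ≤ exp (c ^ 2 / 8) :=
    (hY.mgf_le c).trans_eq (by norm_num; ring_nf)
  have hYL : IndepFun Y L ν := hXL.comp (measurable_id.sub_const μ₀) measurable_id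
  have hYLint : Integrable (fun y => exp (c * (Y + L) y)) ν :=
    hYL.integrable_exp_mul_add (hY.integrable_exp_mul c) hLint
  have hYLmgf : mgf (Y + L) ν c = mgf Y ν c * mgf L ν c :=
    hYL.mgf_add' hY.aestronglyMeasurable hL.aestronglyMeasurable
  have hd := one_sub_sq_div_sq_pos hc
  have h_eq : ∀ y, exp (c * (X y + L y - μ₀) - c ^ 2 / 8 + log (1 - c ^ 2 / ε ^ 2))
      = (1 - c ^ 2 / ε ^ 2) * exp (-(c ^ 2 / 8)) * exp (c * (Y + L) y) := by
    intro y
    rw [exp_add, exp_log hd, sub_eq_add_neg _ (c ^ 2 / 8), exp_add]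
    simp only [Pi.add_apply, Y]
    ring_nf
  calc ∫⁻ y, ENNReal.ofReal (exp (c * (X y + L y - μ₀) - c ^ 2 / 8 + log (1 - c ^ 2 / ε ^ 2))) ∂ν
      = ENNReal.ofReal
          (∫ y, (1 - c ^ 2 / ε ^ 2) * exp (-(c ^ 2 / 8)) * exp (c * (Y + L) y) ∂ν) := by
        simp_rw [h_eq]
        exact (ofReal_integral_eq_lintegral_ofReal (hYLint.const_mul _)
          (Filter.Eventually.of_forall fun _ => by positivity)).symm
    _ = ENNReal.ofReal ((1 - c ^ 2 / ε ^ 2) * exp (-(c ^ 2 / 8)) * (mgf Y ν c * mgf L ν c)) := by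
        rw [integral_const_mul, ← hYLmgf, mgf]
    _ ≤ ENNReal.ofReal 1 := by
        refine ENNReal.ofReal_le_ofReal ?_
        calc (1 - c ^ 2 / ε ^ 2) * exp (-(c ^ 2 / 8)) * (mgf Y ν c * mgf L ν c)
            = exp (-(c ^ 2 / 8)) * mgf Y ν c := by rw [hLmgf]; field_simp
          _ ≤ exp (-(c ^ 2 / 8)) * exp (c ^ 2 / 8) := by gcongr
          _ = 1 := by rw [← exp_add, neg_add_cancel, exp_zero]
    _ = 1 := ENNReal.ofReal_one

end MGF

section CondExpKernel

variable {Ω : Type*} {m m0 : MeasurableSpace Ω} {μ : Measure Ω}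

lemma integrable_of_condExp_ae_eq_const [NeZero μ] {f : Ω → ℝ} {a : ℝ} (ha : a ≠ 0)
    (h : μ[f|m] =ᵐ[μ] fun _ => a) : Integrable f μ := by
  by_contra hf
  rw [condExp_of_not_integrable hf] at h
  obtain ⟨_, h0⟩ := h.exists
  exact ha h0.symm

variable [StandardBorelSpace Ω] [IsFiniteMeasure μ]

lemma ae_integral_condExpKernel_eq (hm : m ≤ m0) {f : Ω → ℝ} (hf : Integrable f μ) {a : ℝ}
    (h : μ[f|m] =ᵐ[μ] fun _ => a) :
    ∀ᵐ ω ∂μ, Integrable f (condExpKernel μ m ω) ∧ ∫ y, f y ∂condExpKernel μ m ω = a := by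
  filter_upwards [hf.condExpKernel_ae, condExp_ae_eq_integral_condExpKernel hm hf, h]
    with ω hf_int h_eq h_const
  exact ⟨hf_int, h_eq ▸ h_const⟩

lemma ae_trim_ae_condExpKernel_of_ae (hm : m ≤ m0) {p : Ω → Prop} (h : ∀ᵐ y ∂μ, p y) :
    ∀ᵐ ω ∂μ.trim hm, ∀ᵐ y ∂condExpKernel μ m ω, p y :=
  Measure.ae_ae_of_ae_comp <| by rwa [condExpKernel_comp_trim]

lemma ae_ae_condExpKernel_of_ae (hm : m ≤ m0) {p : Ω → Prop} (h : ∀ᵐ y ∂μ, p y) :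
    ∀ᵐ ω ∂μ, ∀ᵐ y ∂condExpKernel μ m ω, p y :=
  ae_of_ae_trim hm (ae_trim_ae_condExpKernel_of_ae hm h)

lemma ae_ae_condExpKernel_eq_self (hm : m ≤ m0) {f : Ω → ℝ} (hf : Measurable[m] f) :
    ∀ᵐ ω ∂μ, ∀ᵐ y ∂condExpKernel μ m ω, f y = f ω := by
  have hdiag_meas : Measurable[m0, m.prod m0] Function.diag :=
    (measurable_id.mono le_rfl hm).prodMk measurable_id
  have hset : MeasurableSet[m.prod m0] {p : Ω × Ω | f p.2 = f p.1} :=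
    measurableSet_eq_fun ((hf.mono hm le_rfl).comp measurable_snd) (hf.comp measurable_fst)
  have hdiag : ∀ᵐ p ∂(μ.trim hm ⊗ₘ condExpKernel μ m), f p.2 = f p.1 := by
    rw [compProd_trim_condExpKernel]
    exact (ae_map_iff (@Measurable.aemeasurable _ _ _ (m.prod m0) _ μ hdiag_meas) hset).2
      (Filter.Eventually.of_forall fun _ => rfl)
  exact ae_of_ae_trim hm (Measure.ae_ae_of_ae_compProd hdiag)

lemma AEMeasurable.ae_aemeasurable_condExpKernel (hm : m ≤ m0) {f : Ω → ℝ}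
    (hf : AEMeasurable f μ) : ∀ᵐ ω ∂μ, AEMeasurable f (condExpKernel μ m ω) := by
  filter_upwards [ae_ae_condExpKernel_of_ae hm hf.ae_eq_mk] with ω hω
  exact ⟨hf.mk f, hf.measurable_mk, hω⟩

lemma ProbabilityTheory.CondIndepFun.ae_indepFun_condExpKernel {hm : m ≤ m0} {f g : Ω → ℝ}
    (hf : AEMeasurable f μ) (hg : AEMeasurable g μ) (h : CondIndepFun m hm f g μ) :
    ∀ᵐ ω ∂μ, IndepFun f g (condExpKernel μ m ω) := by
  have h_mk : CondIndepFun m hm (hf.mk f) (hg.mk g) μ :=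
    Kernel.IndepFun.congr' h (ae_trim_ae_condExpKernel_of_ae hm hf.ae_eq_mk)
      (ae_trim_ae_condExpKernel_of_ae hm hg.ae_eq_mk)
  rw [condIndepFun_iff_map_prod_eq_prod_map_map hf.measurable_mk hg.measurable_mk] at h_mk
  filter_upwards [ae_of_ae_trim hm h_mk, ae_ae_condExpKernel_of_ae hm hf.ae_eq_mk,
    ae_ae_condExpKernel_of_ae hm hg.ae_eq_mk] with ω hω hf_mk hg_mk
  rw [Kernel.map_apply _ (hf.measurable_mk.prodMk hg.measurable_mk), Kernel.prod_apply,
    Kernel.map_apply _ hf.measurable_mk, Kernel.map_apply _ hg.measurable_mk,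
    ← indepFun_iff_map_prod_eq_prod_map_map hf.measurable_mk.aemeasurable
      hg.measurable_mk.aemeasurable] at hω
  exact hω.congr (Filter.EventuallyEq.symm hf_mk) (Filter.EventuallyEq.symm hg_mk)

lemma ae_lintegral_condExpKernel_mul_le (hm : m ≤ m0) {g D : Ω → ℝ} (hg : Measurable[m] g)
    (hg0 : ∀ ω, 0 ≤ g ω) (hD : ∀ᵐ ω ∂μ, ∫⁻ y, ENNReal.ofReal (D y) ∂condExpKernel μ m ω ≤ 1) :
    ∀ᵐ ω ∂μ, ∫⁻ y, ENNReal.ofReal (g y * D y) ∂condExpKernel μ m ω ≤ ENNReal.ofReal (g ω) := by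
  filter_upwards [ae_ae_condExpKernel_eq_self hm hg, hD] with ω hg_eq hDω
  calc ∫⁻ y, ENNReal.ofReal (g y * D y) ∂condExpKernel μ m ω
      = ∫⁻ y, ENNReal.ofReal (g ω) * ENNReal.ofReal (D y) ∂condExpKernel μ m ω := by
        refine lintegral_congr_ae ?_
        filter_upwards [hg_eq] with y hy
        rw [hy, ENNReal.ofReal_mul (hg0 ω)]
    _ = ENNReal.ofReal (g ω) * ∫⁻ y, ENNReal.ofReal (D y) ∂condExpKernel μ m ω :=
        lintegral_const_mul' _ _ ENNReal.ofReal_ne_top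
    _ ≤ ENNReal.ofReal (g ω) := mul_le_of_le_one_right' hDω

/-- Stated with `∫⁻` so that integrability of `f (n + 1)` need not be known in advance: it follows
by induction from the same bound. -/
lemma supermartingale_of_ae_lintegral_condExpKernel_le {ℱ : Filtration ℕ m0}
    {f : ℕ → Ω → ℝ} (hf : Adapted ℱ f) (hf0 : ∀ n ω, 0 ≤ f n ω) (hint0 : Integrable (f 0) μ)
    (hstep : ∀ n, ∀ᵐ ω ∂μ,
      ∫⁻ y, ENNReal.ofReal (f (n + 1) y) ∂condExpKernel μ (ℱ n) ω ≤ ENNReal.ofReal (f n ω)) :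
    Supermartingale f ℱ μ := by
  have hmeas : ∀ n, Measurable (f n) := fun n => (hf n).mono (ℱ.le n) le_rfl
  have hlint : ∀ n, ∫⁻ y, ENNReal.ofReal (f (n + 1) y) ∂μ ≤ ∫⁻ y, ENNReal.ofReal (f n y) ∂μ := by
    intro n
    have hκ : Measurable[ℱ n] fun ω =>
        ∫⁻ y, ENNReal.ofReal (f (n + 1) y) ∂condExpKernel μ (ℱ n) ω :=
      (hmeas (n + 1)).ennreal_ofReal.lintegral_kernel
    calc ∫⁻ y, ENNReal.ofReal (f (n + 1) y) ∂μ
        = ∫⁻ ω, ∫⁻ y, ENNReal.ofReal (f (n + 1) y) ∂condExpKernel μ (ℱ n) ω ∂μ.trim (ℱ.le n) := by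
          nth_rewrite 1 [← condExpKernel_comp_trim (μ := μ) (ℱ.le n)]
          exact Measure.lintegral_bind (Kernel.aemeasurable _)
            (hmeas (n + 1)).ennreal_ofReal.aemeasurable
      _ = ∫⁻ ω, ∫⁻ y, ENNReal.ofReal (f (n + 1) y) ∂condExpKernel μ (ℱ n) ω ∂μ :=
          lintegral_trim _ hκ
      _ ≤ ∫⁻ y, ENNReal.ofReal (f n y) ∂μ := lintegral_mono_ae (hstep n)
  have hint : ∀ n, Integrable (f n) μ := by
    intro n
    refine ⟨(hmeas n).aestronglyMeasurable, ?_⟩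
    rw [hasFiniteIntegral_iff_ofReal (Filter.Eventually.of_forall (hf0 n))]
    refine lt_of_le_of_lt ?_ ((hasFiniteIntegral_iff_ofReal
      (Filter.Eventually.of_forall (hf0 0))).1 hint0.hasFiniteIntegral)
    induction n with
    | zero => exact le_rfl
    | succ n ih => exact (hlint n).trans ih
  refine supermartingale_nat (fun n => (hf n).stronglyMeasurable) hint fun n => ?_
  filter_upwards [condExp_ae_eq_integral_condExpKernel (ℱ.le n) (hint (n + 1)), hstep n]
    with ω h_eq h_le
  rw [h_eq, integral_eq_lintegral_of_nonneg_ae (Filter.Eventually.of_forall (hf0 _))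
    (hmeas _).aestronglyMeasurable]
  exact ENNReal.toReal_le_of_le_ofReal (hf0 n ω) h_le

lemma ae_lintegral_condExpKernel_exp_laplace_increment_le_one [IsProbabilityMeasure μ]
    (hm : m ≤ m0) {X L c : Ω → ℝ} {μ₀ ε : ℝ} (hX : Integrable X μ) (hL : AEMeasurable L μ)
    (hXbdd : ∀ᵐ ω ∂μ, X ω ∈ Set.Icc (0 : ℝ) 1) (hXmean : μ[X|m] =ᵐ[μ] fun _ => μ₀)
    (hLmgf : ∀ c : ℝ, |c| < ε →
      μ[fun ω => exp (c * L ω)|m] =ᵐ[μ] fun _ => 1 / (1 - c ^ 2 / ε ^ 2))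
    (hXL : CondIndepFun m hm X L μ) (hc : Measurable[m] c) (hcε : ∀ ω, |c ω| < ε) :
    ∀ᵐ ω ∂μ, ∫⁻ y, ENNReal.ofReal (exp (c y * (X y + L y - μ₀) - c y ^ 2 / 8
      + log (1 - c y ^ 2 / ε ^ 2))) ∂condExpKernel μ m ω ≤ 1 := by
  have hg : ContinuousOn (fun c : ℝ => 1 / (1 - c ^ 2 / ε ^ 2)) (Set.Ioo (-ε) ε) :=
    continuousOn_const.div (by fun_prop) fun c hc => (one_sub_sq_div_sq_pos (abs_lt.2 hc)).ne'
  have hLrat : ∀ᵐ ω ∂μ, ∀ q : ℚ, (q : ℝ) ∈ Set.Ioo (-ε) ε →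
      Integrable (fun y => exp (q * L y)) (condExpKernel μ m ω) ∧
        mgf L (condExpKernel μ m ω) q = 1 / (1 - (q : ℝ) ^ 2 / ε ^ 2) := by
    rw [ae_all_iff]
    intro q
    by_cases hq : (q : ℝ) ∈ Set.Ioo (-ε) ε
    · have hq_mgf := hLmgf q (abs_lt.2 hq)
      have hq_int := integrable_of_condExp_ae_eq_const
        (one_div_pos.2 (one_sub_sq_div_sq_pos (abs_lt.2 hq))).ne' hq_mgf
      filter_upwards [ae_integral_condExpKernel_eq hm hq_int hq_mgf] with ω hω _ using hω
    · exact Filter.Eventually.of_forall fun _ hq' => absurd hq' hq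
  filter_upwards [hLrat, ae_ae_condExpKernel_eq_self hm hc,
    ae_integral_condExpKernel_eq hm hX hXmean, ae_ae_condExpKernel_of_ae hm hXbdd,
    hL.ae_aemeasurable_condExpKernel hm,
    CondIndepFun.ae_indepFun_condExpKernel hX.aemeasurable hL hXL]
    with ω hLω hcω hXω hXbddω hLmeas hind
  have hLc := integrable_exp_mul_and_mgf_eqOn_Ioo_of_rat hg hLω (c ω) (abs_lt.1 (hcε ω))
  calc ∫⁻ y, ENNReal.ofReal (exp (c y * (X y + L y - μ₀) - c y ^ 2 / 8
        + log (1 - c y ^ 2 / ε ^ 2))) ∂condExpKernel μ m ω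
      = ∫⁻ y, ENNReal.ofReal (exp (c ω * (X y + L y - μ₀) - c ω ^ 2 / 8
        + log (1 - c ω ^ 2 / ε ^ 2))) ∂condExpKernel μ m ω := by
        refine lintegral_congr_ae ?_
        filter_upwards [hcω] with y hy
        rw [hy]
    _ ≤ 1 := lintegral_exp_laplace_increment_le_one hXω.1.aemeasurable hLmeas hind hXbddω hXω.2
        (hcε ω) hLc.1 hLc.2

end CondExpKernel

theorem laplace_mechanism_supermartingale_general
    {Ω : Type*} [m0 : MeasurableSpace Ω] [StandardBorelSpace Ω]
    (μ : Measure Ω) [IsProbabilityMeasure μ]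
    (𝒵 : Filtration ℕ m0) (X L Z : ℕ → Ω → ℝ) (hZ : Adapted 𝒵 Z)
    (ε : ℕ → ℝ)
    (l : ℕ → Ω → ℝ) (μstar : ℝ)
    (hZdef : ∀ t ω, Z t ω = X t ω + L t ω)
    (hXbdd : ∀ t, ∀ᵐ ω ∂μ, X t ω ∈ Set.Icc (0 : ℝ) 1)
    (hXint : ∀ t, Integrable (X t) μ)
    (hXmean : ∀ t, 1 ≤ t → μ[X t|𝒵 (t - 1)] =ᵐ[μ] fun _ => μstar)
    (hLmgf : ∀ t, 1 ≤ t → ∀ c : ℝ, |c| < ε t →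
      μ[fun ω => Real.exp (c * L t ω)|𝒵 (t - 1)] =ᵐ[μ]
        fun _ => 1 / (1 - c ^ 2 / (ε t) ^ 2))
    (hcondindep : ∀ t, 1 ≤ t → CondIndepFun (𝒵 (t - 1)) (𝒵.le (t - 1)) (X t) (L t) μ)
    (hlpred : ∀ t, 1 ≤ t → Measurable[𝒵 (t - 1)] (l t))
    (hlval : ∀ t ω, l t ω ∈ Set.Ico (0 : ℝ) (ε t))
    (M : ℕ → Ω → ℝ)
    (hM : ∀ t ω, M t ω = ∏ i ∈ Finset.Icc 1 t,
      Real.exp (l i ω * (Z i ω - μstar) - (l i ω) ^ 2 / 8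
        + Real.log (1 - (l i ω) ^ 2 / (ε i) ^ 2))) :
    Supermartingale M 𝒵 μ ∧ (∀ ω, M 0 ω = 1) ∧ ∀ t ω, 0 ≤ M t ω := by
  have hM0 : ∀ ω, M 0 ω = 1 := fun ω => by simp [hM]
  have hM_nonneg : ∀ t ω, 0 ≤ M t ω := fun t ω => by
    rw [hM]
    exact prod_nonneg fun i _ => (exp_pos _).le
  have hM_succ : ∀ t, M (t + 1) = fun ω => M t ω * exp (l (t + 1) ω * (X (t + 1) ω
      + L (t + 1) ω - μstar) - l (t + 1) ω ^ 2 / 8 + log (1 - l (t + 1) ω ^ 2 / ε (t + 1) ^ 2)) :=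
    fun t => funext fun ω => by rw [hM, hM, prod_Icc_succ_top (Nat.le_add_left 1 t), hZdef]
  have hM_adapted : Adapted 𝒵 M := by
    intro t
    rw [funext (hM t)]
    refine Finset.measurable_prod _ fun i hi => ?_
    have hl : Measurable[𝒵 t] (l i) :=
      (hlpred i (mem_Icc.1 hi).1).mono (𝒵.mono ((Nat.sub_le i 1).trans (mem_Icc.1 hi).2)) le_rfl
    have hZi : Measurable[𝒵 t] (Z i) := (hZ i).mono (𝒵.mono (mem_Icc.1 hi).2) le_rfl
    fun_prop
  refine ⟨supermartingale_of_ae_lintegral_condExpKernel_le hM_adapted hM_nonneg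
    (by simp [funext hM0]) fun t => ?_, hM0, hM_nonneg⟩
  have hL : AEMeasurable (L (t + 1)) μ := by
    rw [show L (t + 1) = fun ω => Z (t + 1) ω - X (t + 1) ω by funext ω; rw [hZdef]; ring]
    exact ((hZ (t + 1)).mono (𝒵.le _) le_rfl).aemeasurable.sub (hXint (t + 1)).aemeasurable
  rw [hM_succ]
  exact ae_lintegral_condExpKernel_mul_le (𝒵.le t) (hM_adapted t) (hM_nonneg t)
    (ae_lintegral_condExpKernel_exp_laplace_increment_le_one (𝒵.le t) (hXint (t + 1)) hL
      (hXbdd (t + 1)) (hXmean (t + 1) le_add_self) (hLmgf (t + 1) le_add_self)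
      (hcondindep (t + 1) le_add_self) (hlpred (t + 1) le_add_self)
      fun ω => (abs_of_nonneg (hlval (t + 1) ω).1).trans_lt (hlval (t + 1) ω).2)

/-- Laplace mechanism supermartingale: with `Z_t = X_t + L_t`, where `X_t ∈ [0,1]` has
conditional mean `μ*` given the past, `L_t` is conditionally mean-zero Laplace with scale
`1/ε_t` (conditional mgf `c ↦ 1/(1 - c²/ε_t²)` for `|c| < ε_t`), conditionally independent
of `X_t`, and `λ_t ∈ [0, ε_t)` predictable, the process
`M_t = ∏_{i=1}^t exp{λ_i (Z_i − μ*) − λ_i²/8 − ψ_i(λ_i)}` with `ψ_i(λ) = −log(1 − λ²/ε_i²)`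
is a nonnegative supermartingale starting at one. -/
theorem laplace_mechanism_supermartingale
    {Ω : Type*} [m0 : MeasurableSpace Ω] [StandardBorelSpace Ω]
    (μ : Measure Ω) [IsProbabilityMeasure μ]
    (𝒵 : Filtration ℕ m0) (X L Z : ℕ → Ω → ℝ) (hZ : Adapted 𝒵 Z)
    (ε : ℕ → ℝ) (hε : ∀ t, 0 < ε t)
    (l : ℕ → Ω → ℝ) (μstar : ℝ) (hμstar : μstar ∈ Set.Icc (0 : ℝ) 1)
    (hZdef : ∀ t ω, Z t ω = X t ω + L t ω)
    (hXbdd : ∀ t, ∀ᵐ ω ∂μ, X t ω ∈ Set.Icc (0 : ℝ) 1)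
    (hXint : ∀ t, Integrable (X t) μ)
    (hXmean : ∀ t, 1 ≤ t → μ[X t|𝒵 (t - 1)] =ᵐ[μ] fun _ => μstar)
    (hLmgf : ∀ t, 1 ≤ t → ∀ c : ℝ, |c| < ε t →
      μ[fun ω => Real.exp (c * L t ω)|𝒵 (t - 1)] =ᵐ[μ]
        fun _ => 1 / (1 - c ^ 2 / (ε t) ^ 2))
    (hcondindep : ∀ t, 1 ≤ t → CondIndepFun (𝒵 (t - 1)) (𝒵.le (t - 1)) (X t) (L t) μ)
    (hlpred : ∀ t, 1 ≤ t → Measurable[𝒵 (t - 1)] (l t))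
    (hlval : ∀ t ω, l t ω ∈ Set.Ico (0 : ℝ) (ε t))
    (M : ℕ → Ω → ℝ)
    (hM : ∀ t ω, M t ω = ∏ i ∈ Finset.Icc 1 t,
      Real.exp (l i ω * (Z i ω - μstar) - (l i ω) ^ 2 / 8
        + Real.log (1 - (l i ω) ^ 2 / (ε i) ^ 2))) :
    Supermartingale M 𝒵 μ ∧ (∀ ω, M 0 ω = 1) ∧ ∀ t ω, 0 ≤ M t ω :=
  laplace_mechanism_supermartingale_general (m0 := m0) μ 𝒵 X L Z hZ ε l μstar hZdef hXbdd hXint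
    hXmean hLmgf hcondindep hlpred hlval M hM
end
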